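/- The map d sending the generator (i)⊗(i) of the bimodule P_i ⊗_ℤ {}_iP = R_n(i) ⊗_ℤ (i)R_n to (i) ∈ R_n (i.e. d(x ⊗ y) = xy) is a morphism of R_n-bimodules, and the map d' : R_n → P_i ⊗_ℤ {}_iP given by d'(1) = (i−1|i)⊗(i|i−1) + (i+1|i)⊗(i|i+1) + (i)⊗(i|i−1|i) + (i|i−1|i)⊗(i) is also a morphism of R_n-bimodules, i.e. d'(r) := r·d'(1) = d'(1)·r for all r ∈ R_n. -/

import Mathlib

/-- Generators of the path algebra of the cyclic quiver on `n` vertices: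
`e i` is the constant path `(i)` at vertex `i`, `a i` the arrow `(i|i+1)`,
`b i` the arrow `(i+1|i)` (indices in `Fin n`, i.e. mod `n`). -/
inductive Gen (n : ℕ) : Type
  | e : Fin n → Gen n
  | a : Fin n → Gen n
  | b : Fin n → Gen n

/-- The generator `(i)` in the free algebra. -/
noncomputable def Ev (n : ℕ) (i : Fin n) : FreeAlgebra ℤ (Gen n) := FreeAlgebra.ι ℤ (Gen.e i)

/-- The generator `(i|i+1)` in the free algebra. -/
noncomputable def Av (n : ℕ) (i : Fin n) : FreeAlgebra ℤ (Gen n) := FreeAlgebra.ι ℤ (Gen.a i)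

/-- The generator `(i+1|i)` in the free algebra. -/
noncomputable def Bv (n : ℕ) (i : Fin n) : FreeAlgebra ℤ (Gen n) := FreeAlgebra.ι ℤ (Gen.b i)

/-- The defining relations of `R_n`: the path-algebra relations (the `(i)` are
orthogonal idempotents summing to `1` and the arrows compose as paths of the cyclic
quiver), together with the quiver-algebra relations
`(i|i+1|i) = (i|i-1|i)` and `(i-1|i|i+1) = (i+1|i|i-1) = 0` (indices mod `n`). -/
inductive QRel (n : ℕ) [NeZero n] : FreeAlgebra ℤ (Gen n) → FreeAlgebra ℤ (Gen n) → Prop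
  | idem (i : Fin n) : QRel n (Ev n i * Ev n i) (Ev n i)
  | orth (i j : Fin n) (h : i ≠ j) : QRel n (Ev n i * Ev n j) 0
  | sum_eq_one : QRel n (∑ i, Ev n i) 1
  | eA (i : Fin n) : QRel n (Ev n i * Av n i) (Av n i)
  | Ae (i : Fin n) : QRel n (Av n i * Ev n (i + 1)) (Av n i)
  | eB (i : Fin n) : QRel n (Ev n (i + 1) * Bv n i) (Bv n i)
  | Be (i : Fin n) : QRel n (Bv n i * Ev n i) (Bv n i)
  | loop (i : Fin n) : QRel n (Av n i * Bv n i) (Bv n (i - 1) * Av n (i - 1))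
  | aa (i : Fin n) : QRel n (Av n (i - 1) * Av n i) 0
  | bb (i : Fin n) : QRel n (Bv n i * Bv n (i - 1)) 0

/-- The algebra `R_n`: the quotient of the path algebra of the cyclic quiver on `n`
vertices by the relations `(i|i+1|i) = (i|i-1|i)`, `(i-1|i|i+1) = (i+1|i|i-1) = 0`. -/
abbrev Rn (n : ℕ) [NeZero n] : Type := RingQuot (QRel n)

/-- The constant path `(i)` in `R_n`. -/
noncomputable def ee (n : ℕ) [NeZero n] (i : Fin n) : Rn n :=
  RingQuot.mkRingHom (QRel n) (Ev n i)

/-- The path `(i|i+1)` in `R_n`. -/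
noncomputable def aA (n : ℕ) [NeZero n] (i : Fin n) : Rn n :=
  RingQuot.mkRingHom (QRel n) (Av n i)

/-- The path `(i+1|i)` in `R_n`. -/
noncomputable def bB (n : ℕ) [NeZero n] (i : Fin n) : Rn n :=
  RingQuot.mkRingHom (QRel n) (Bv n i)

open scoped TensorProduct
section Aux
open RingQuot

variable {n : ℕ} [NeZero n]

lemma rel_eq {x y : FreeAlgebra ℤ (Gen n)} (h : QRel n x y) :
    RingQuot.mkRingHom (QRel n) x = RingQuot.mkRingHom (QRel n) y :=
  RingQuot.mkRingHom_rel h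

lemma ee_ee (i : Fin n) : ee n i * ee n i = ee n i := by
  simp only [ee, ← map_mul]; exact rel_eq (QRel.idem i)

lemma ee_ee_ne {i j : Fin n} (h : i ≠ j) : ee n i * ee n j = 0 := by
  simp only [ee, ← map_mul]; rw [rel_eq (QRel.orth i j h), map_zero]

lemma ee_aA (i : Fin n) : ee n i * aA n i = aA n i := by
  simp only [ee, aA, ← map_mul]; exact rel_eq (QRel.eA i)

lemma aA_ee (i : Fin n) : aA n i * ee n (i + 1) = aA n i := by
  simp only [ee, aA, ← map_mul]; exact rel_eq (QRel.Ae i)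

lemma ee_bB (i : Fin n) : ee n (i + 1) * bB n i = bB n i := by
  simp only [ee, bB, ← map_mul]; exact rel_eq (QRel.eB i)

lemma bB_ee (i : Fin n) : bB n i * ee n i = bB n i := by
  simp only [ee, bB, ← map_mul]; exact rel_eq (QRel.Be i)

lemma loop (i : Fin n) : aA n i * bB n i = bB n (i - 1) * aA n (i - 1) := by
  simp only [aA, bB, ← map_mul]; exact rel_eq (QRel.loop i)

lemma aa0 (i : Fin n) : aA n (i - 1) * aA n i = 0 := by
  simp only [aA, ← map_mul]; rw [rel_eq (QRel.aa i), map_zero]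

lemma bb0 (i : Fin n) : bB n i * bB n (i - 1) = 0 := by
  simp only [bB, ← map_mul]; rw [rel_eq (QRel.bb i), map_zero]

lemma ee_aA_ne {j i : Fin n} (h : j ≠ i) : ee n j * aA n i = 0 := by
  rw [← ee_aA i, ← mul_assoc, ee_ee_ne h, zero_mul]

lemma aA_ee_ne {i j : Fin n} (h : j ≠ i + 1) : aA n i * ee n j = 0 := by
  rw [← aA_ee i, mul_assoc, ee_ee_ne (Ne.symm h), mul_zero]

lemma ee_bB_ne {j i : Fin n} (h : j ≠ i + 1) : ee n j * bB n i = 0 := by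
  rw [← ee_bB i, ← mul_assoc, ee_ee_ne h, zero_mul]

lemma bB_ee_ne {i j : Fin n} (h : j ≠ i) : bB n i * ee n j = 0 := by
  rw [← bB_ee i, mul_assoc, ee_ee_ne (Ne.symm h), mul_zero]

lemma aA_aA (j i : Fin n) : aA n j * aA n i = 0 := by
  by_cases h : j = i - 1
  · subst h; exact aa0 i
  · rw [← ee_aA i, ← mul_assoc, aA_ee_ne, zero_mul]
    intro hc; apply h; rw [hc, add_sub_cancel_right]

lemma bB_bB (j i : Fin n) : bB n j * bB n i = 0 := by
  by_cases h : j = i + 1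
  · subst h
    have := bb0 (n := n) (i + 1)
    rwa [add_sub_cancel_right] at this
  · rw [← ee_bB i, ← mul_assoc, bB_ee_ne (Ne.symm h), zero_mul]

lemma aA_bB_ne {j i : Fin n} (h : j ≠ i) : aA n j * bB n i = 0 := by
  rw [← ee_bB i, ← mul_assoc, aA_ee_ne, zero_mul]
  intro hc; exact h (add_right_cancel hc).symm

lemma bB_aA_ne {j i : Fin n} (h : j ≠ i) : bB n j * aA n i = 0 := by
  rw [← ee_aA i, ← mul_assoc, bB_ee_ne (Ne.symm h), zero_mul]

end Aux
section Cen
open TensorProduct LinearMap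

variable {n : ℕ} [NeZero n]

/-- The element `d'(1)`. -/
noncomputable def dd (n : ℕ) [NeZero n] (i : Fin n) : Rn n ⊗[ℤ] Rn n :=
  aA n (i - 1) ⊗ₜ[ℤ] bB n (i - 1) + bB n i ⊗ₜ[ℤ] aA n i
    + ee n i ⊗ₜ[ℤ] (bB n (i - 1) * aA n (i - 1))
    + (bB n (i - 1) * aA n (i - 1)) ⊗ₜ[ℤ] ee n i

/-- Centrality of `d'(1)` with respect to `r`. -/
def Cen (n : ℕ) [NeZero n] (i : Fin n) (r : Rn n) : Prop :=
  (r * aA n (i - 1)) ⊗ₜ[ℤ] bB n (i - 1) + (r * bB n i) ⊗ₜ[ℤ] aA n i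
    + (r * ee n i) ⊗ₜ[ℤ] (bB n (i - 1) * aA n (i - 1))
    + (r * (bB n (i - 1) * aA n (i - 1))) ⊗ₜ[ℤ] ee n i
  = aA n (i - 1) ⊗ₜ[ℤ] (bB n (i - 1) * r) + bB n i ⊗ₜ[ℤ] (aA n i * r)
    + ee n i ⊗ₜ[ℤ] (bB n (i - 1) * aA n (i - 1) * r)
    + (bB n (i - 1) * aA n (i - 1)) ⊗ₜ[ℤ] (ee n i * r)

noncomputable def Lm (r : Rn n) :=
  TensorProduct.map (LinearMap.mulLeft ℤ r) (@LinearMap.id ℤ (Rn n) _ _ Algebra.toModule)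

noncomputable def Rm (r : Rn n) :=
  TensorProduct.map (@LinearMap.id ℤ (Rn n) _ _ Algebra.toModule) (LinearMap.mulRight ℤ r)

lemma cen_iff (i : Fin n) (r : Rn n) : Cen n i r ↔ Lm r (dd n i) = Rm r (dd n i) := by
  exact Iff.rfl

lemma LR_comm (r s : Rn n) (u : Rn n ⊗[ℤ] Rn n) : Lm r (Rm s u) = Rm s (Lm r u) := by
  have h : (Lm (n := n) r).comp (Rm s) = (Rm s).comp (Lm r) := by
    exact TensorProduct.ext' fun x y => rfl
  exact DFunLike.congr_fun h u

lemma Lm_mul (r s : Rn n) (u : Rn n ⊗[ℤ] Rn n) : Lm (r * s) u = Lm r (Lm s u) := by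
  have h : Lm (n := n) (r * s) = (Lm r).comp (Lm s) := by
    simp [Lm, LinearMap.mulLeft_mul, ← TensorProduct.map_comp]
  rw [h]; rfl

lemma Rm_mul (r s : Rn n) (u : Rn n ⊗[ℤ] Rn n) : Rm (r * s) u = Rm s (Rm r u) := by
  have h : Rm (n := n) (r * s) = (Rm s).comp (Rm r) := by
    simp [Rm, LinearMap.mulRight_mul, ← TensorProduct.map_comp]
  rw [h]; rfl

lemma Lm_add (r s : Rn n) (u : Rn n ⊗[ℤ] Rn n) : Lm (r + s) u = Lm r u + Lm s u := by
  have hm : LinearMap.mulLeft ℤ (r + s) = LinearMap.mulLeft ℤ r + LinearMap.mulLeft ℤ s :=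
    LinearMap.ext fun x => add_mul r s x
  have h : Lm (n := n) (r + s) = Lm r + Lm s := by
    rw [Lm, hm, TensorProduct.map_add_left]; rfl
  rw [h]; rfl

lemma cen_mul {i : Fin n} {r s : Rn n} (hr : Cen n i r) (hs : Cen n i s) :
    Cen n i (r * s) := by
  rw [cen_iff] at *
  rw [Lm_mul, hs, LR_comm, hr, ← Rm_mul]

lemma cen_add {i : Fin n} {r s : Rn n} (hr : Cen n i r) (hs : Cen n i s) :
    Cen n i (r + s) := by
  rw [cen_iff] at *
  rw [Lm_add, hr, hs]
  have hm : LinearMap.mulRight ℤ (r + s) = LinearMap.mulRight ℤ r + LinearMap.mulRight ℤ s :=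
    LinearMap.ext fun x => mul_add x r s
  have h : Rm (n := n) (r + s) = Rm r + Rm s := by
    rw [Rm, hm, TensorProduct.map_add_right]; rfl
  rw [h]; rfl

lemma cen_int (i : Fin n) (z : ℤ) : Cen n i (algebraMap ℤ (Rn n) z) := by
  rw [cen_iff]
  have h : Lm (n := n) (algebraMap ℤ (Rn n) z) = Rm (algebraMap ℤ (Rn n) z) := by
    apply TensorProduct.ext'
    intro x y
    show (algebraMap ℤ (Rn n) z * x) ⊗ₜ[ℤ] y = x ⊗ₜ[ℤ] (y * algebraMap ℤ (Rn n) z)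
    rw [eq_intCast (algebraMap ℤ (Rn n)) z, ← Int.cast_comm]
    have h1 := smul_tmul (R := ℤ) (R' := ℤ) z x y
    rwa [zsmul_eq_mul, zsmul_eq_mul] at h1
  rw [h]; rfl

end Cen
section FinFacts
variable {n : ℕ} [NeZero n]

lemma fin_one_ne_zero (hn : 3 ≤ n) : (1 : Fin n) ≠ 0 := by
  intro h
  have := congrArg Fin.val h
  simp [Fin.val_one'] at this
  omega

lemma fin_two_ne_zero (hn : 3 ≤ n) : (1 : Fin n) + 1 ≠ 0 := by
  intro h
  have := congrArg Fin.val h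
  simp [Fin.val_add, Fin.val_one'] at this
  rw [Nat.mod_eq_of_lt (by omega)] at this
  omega

lemma sub_one_ne (hn : 3 ≤ n) (i : Fin n) : i - 1 ≠ i :=
  fun h => fin_one_ne_zero hn (sub_eq_self.mp h)

lemma ne_add_one (hn : 3 ≤ n) (i : Fin n) : i ≠ i + 1 :=
  fun h => fin_one_ne_zero hn (left_eq_add.mp h)

lemma sub_one_ne_add_one (hn : 3 ≤ n) (i : Fin n) : i - 1 ≠ i + 1 := by
  intro h
  have h2 : i = i + (1 + 1) := by
    rw [← add_assoc, ← h, sub_add_cancel]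
  exact fin_two_ne_zero hn (left_eq_add.mp h2)

lemma sub_add_one (i : Fin n) : i - 1 + 1 = i := sub_add_cancel i 1

end FinFacts
section GenCases
variable {n : ℕ} [NeZero n]

lemma aA_ee_ne' {j i : Fin n} (h : j ≠ i - 1) : aA n j * ee n i = 0 :=
  aA_ee_ne (fun hc => h (by rw [hc, add_sub_cancel_right]))

lemma ee_bB_ne' {i j : Fin n} (h : j ≠ i - 1) : ee n i * bB n j = 0 :=
  ee_bB_ne (fun hc => h (by rw [hc, add_sub_cancel_right]))

lemma ee_c (i : Fin n) : ee n i * (bB n (i - 1) * aA n (i - 1)) = bB n (i - 1) * aA n (i - 1) := by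
  rw [← mul_assoc]
  have h := ee_bB (n := n) (i - 1)
  rw [sub_add_one] at h
  rw [h]

lemma c_ee (i : Fin n) : bB n (i - 1) * aA n (i - 1) * ee n i = bB n (i - 1) * aA n (i - 1) := by
  rw [mul_assoc]
  have h := aA_ee (n := n) (i - 1)
  rw [sub_add_one] at h
  rw [h]

lemma ee_c_ne {j i : Fin n} (h : j ≠ i) :
    ee n j * (bB n (i - 1) * aA n (i - 1)) = 0 := by
  rw [← mul_assoc, ee_bB_ne (by rwa [sub_add_one]), zero_mul]

lemma c_ee_ne {i j : Fin n} (h : j ≠ i) :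
    bB n (i - 1) * aA n (i - 1) * ee n j = 0 := by
  rw [mul_assoc, aA_ee_ne (by rwa [sub_add_one]), mul_zero]

lemma aA_c (j i : Fin n) : aA n j * (bB n (i - 1) * aA n (i - 1)) = 0 := by
  by_cases h : j = i - 1
  · subst h
    rw [← mul_assoc, loop, mul_assoc, aA_aA, mul_zero]
  · rw [← mul_assoc, aA_bB_ne h, zero_mul]

lemma c_aA (i j : Fin n) : bB n (i - 1) * aA n (i - 1) * aA n j = 0 := by
  rw [mul_assoc, aA_aA, mul_zero]

lemma bB_c (j i : Fin n) : bB n j * (bB n (i - 1) * aA n (i - 1)) = 0 := by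
  rw [← mul_assoc, bB_bB, zero_mul]

lemma c_bB (i j : Fin n) : bB n (i - 1) * aA n (i - 1) * bB n j = 0 := by
  by_cases h : j = i - 1
  · subst h
    rw [mul_assoc, loop, ← mul_assoc, bB_bB, zero_mul]
  · rw [mul_assoc, aA_bB_ne (Ne.symm h), mul_zero]

lemma aA_ee_sub (i : Fin n) : aA n (i - 1) * ee n i = aA n (i - 1) := by
  have h := aA_ee (n := n) (i - 1)
  rwa [sub_add_one] at h

lemma ee_bB_sub (i : Fin n) : ee n i * bB n (i - 1) = bB n (i - 1) := by
  have h := ee_bB (n := n) (i - 1)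
  rwa [sub_add_one] at h

lemma cen_ee (hn : 3 ≤ n) (i j : Fin n) : Cen n i (ee n j) := by
  unfold Cen
  by_cases hj1 : j = i - 1
  · subst hj1
    rw [ee_aA (i - 1), ee_bB_ne (sub_one_ne_add_one hn i), ee_ee_ne (sub_one_ne hn i),
      ee_c_ne (sub_one_ne hn i), bB_ee (i - 1), aA_ee_ne (sub_one_ne_add_one hn i),
      c_ee_ne (sub_one_ne hn i), ee_ee_ne (Ne.symm (sub_one_ne hn i))]
    simp
  by_cases hj2 : j = i
  · rw [hj2]
    rw [ee_aA_ne (Ne.symm (sub_one_ne hn i)), ee_bB_ne (ne_add_one hn i), ee_ee,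
      ee_c i, bB_ee_ne (Ne.symm (sub_one_ne hn i)), aA_ee_ne (ne_add_one hn i), c_ee i]
    simp
  by_cases hj3 : j = i + 1
  · subst hj3
    rw [ee_aA_ne (Ne.symm (sub_one_ne_add_one hn i)), ee_bB i,
      ee_ee_ne (Ne.symm (ne_add_one hn i)), ee_c_ne (Ne.symm (ne_add_one hn i)),
      bB_ee_ne (Ne.symm (sub_one_ne_add_one hn i)), aA_ee i,
      c_ee_ne (Ne.symm (ne_add_one hn i)), ee_ee_ne (ne_add_one hn i)]
    simp
  · rw [ee_aA_ne hj1, ee_bB_ne hj3, ee_ee_ne hj2, ee_c_ne hj2, bB_ee_ne hj1,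
      aA_ee_ne hj3, c_ee_ne hj2, ee_ee_ne (Ne.symm hj2)]
    simp

lemma cen_aA (hn : 3 ≤ n) (i j : Fin n) : Cen n i (aA n j) := by
  unfold Cen
  by_cases hj : j = i
  · rw [hj]
    rw [aA_aA, loop, aA_ee_ne (ne_add_one hn i), aA_c, bB_aA_ne (sub_one_ne hn i),
      aA_aA, c_aA, ee_aA i]
    simp
  by_cases hj1 : j = i - 1
  · subst hj1
    rw [aA_aA, aA_bB_ne (sub_one_ne hn i), aA_ee_sub i, aA_c, aA_aA, c_aA,
      ee_aA_ne (Ne.symm (sub_one_ne hn i))]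
    simp
  · rw [aA_aA, aA_bB_ne hj, aA_ee_ne' hj1, aA_c, bB_aA_ne (Ne.symm hj1), aA_aA,
      c_aA, ee_aA_ne (Ne.symm hj)]
    simp

lemma cen_bB (hn : 3 ≤ n) (i j : Fin n) : Cen n i (bB n j) := by
  unfold Cen
  by_cases hj1 : j = i - 1
  · subst hj1
    rw [bB_bB, bB_ee_ne (Ne.symm (sub_one_ne hn i)), bB_c, bB_bB,
      aA_bB_ne (Ne.symm (sub_one_ne hn i)), c_bB, ee_bB_sub i]
    simp
  by_cases hj : j = i
  · rw [hj]
    rw [bB_aA_ne (Ne.symm (sub_one_ne hn i)), bB_bB, bB_ee i, bB_c, bB_bB, loop,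
      c_bB, ee_bB_ne (ne_add_one hn i)]
    simp
  · rw [bB_aA_ne hj1, bB_bB, bB_ee_ne (Ne.symm hj), bB_c, bB_bB, aA_bB_ne (Ne.symm hj),
      c_bB, ee_bB_ne' hj1]
    simp

end GenCases

/-- the multiplication map `d : P_i ⊗_ℤ (i)R_n → R_n`, `x ⊗ y ↦ x·y`,
is a morphism of `R_n`-bimodules, and the map `d' : R_n → P_i ⊗_ℤ (i)R_n` determined
by `d'(1) = (i-1|i)⊗(i|i-1) + (i+1|i)⊗(i|i+1) + (i)⊗(i|i-1|i) + (i|i-1|i)⊗(i)` is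
also a morphism of `R_n`-bimodules, i.e. `r · d'(1) = d'(1) · r` for all `r ∈ R_n`.
(Here the bimodule actions on a tensor product are `r·(x ⊗ y) = (r·x) ⊗ y` and
`(x ⊗ y)·r = x ⊗ (y·r)`, and `(i-1|i) = a_{i-1}`, `(i|i-1) = b_{i-1}`,
`(i+1|i) = b_i`, `(i|i+1) = a_i`, `(i|i-1|i) = b_{i-1}·a_{i-1}`.) -/
theorem stmt18 (n : ℕ) [NeZero n] (hn : 3 ≤ n) (i : Fin n) :
    (∃ d : Rn n ⊗[ℤ] Rn n →ₗ[ℤ] Rn n,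
      (∀ x y : Rn n, d (x ⊗ₜ[ℤ] y) = x * y) ∧
      (∀ r x y : Rn n, d ((r * x) ⊗ₜ[ℤ] y) = r * d (x ⊗ₜ[ℤ] y)) ∧
      (∀ r x y : Rn n, d (x ⊗ₜ[ℤ] (y * r)) = d (x ⊗ₜ[ℤ] y) * r)) ∧
    (∀ r : Rn n,
      (r * aA n (i - 1)) ⊗ₜ[ℤ] bB n (i - 1) + (r * bB n i) ⊗ₜ[ℤ] aA n i
        + (r * ee n i) ⊗ₜ[ℤ] (bB n (i - 1) * aA n (i - 1))
        + (r * (bB n (i - 1) * aA n (i - 1))) ⊗ₜ[ℤ] ee n i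
      = aA n (i - 1) ⊗ₜ[ℤ] (bB n (i - 1) * r) + bB n i ⊗ₜ[ℤ] (aA n i * r)
        + ee n i ⊗ₜ[ℤ] (bB n (i - 1) * aA n (i - 1) * r)
        + (bB n (i - 1) * aA n (i - 1)) ⊗ₜ[ℤ] (ee n i * r)) := by
  constructor
  · refine ⟨LinearMap.mul' ℤ (Rn n), fun x y => LinearMap.mul'_apply,
      fun r x y => ?_, fun r x y => ?_⟩
    · exact mul_assoc r x y
    · exact (mul_assoc x y r).symm
  · intro r
    change Cen n i r
    obtain ⟨x, rfl⟩ := RingQuot.mkRingHom_surjective (QRel n) r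
    induction x using FreeAlgebra.induction with
    | grade0 z =>
      have hz : (RingQuot.mkRingHom (QRel n)) ((algebraMap ℤ (FreeAlgebra ℤ (Gen n))) z)
          = algebraMap ℤ (Rn n) z := by
        simp [algebraMap_int_eq, map_intCast]
      rw [hz]
      exact cen_int i z
    | grade1 g =>
      cases g with
      | e j => exact cen_ee hn i j
      | a j => exact cen_aA hn i j
      | b j => exact cen_bB hn i j
    | mul x y hx hy =>
      rw [map_mul]
      exact cen_mul hx hy
    | add x y hx hy =>
      rw [map_add]
      exact cen_add hx hy
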